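/- arXiv:2302.13182 — 2 statements merged into one kernel-verified Lean document; each statement's English description precedes it below -/
import Mathlib

section
/- (Reduction lemma for vector fields, high range.) Let ℓ ≥ 1 and r ≥ ℓ + 1, and let Y be a real-valued function of class C^{ℓ+r} on an interval [0,ε) whose Taylor expansion of order ℓ+r at 0 starts with α·x^{ℓ+1} for some α > 0; that is, Y^{(j)}(0) = 0 for 0 ≤ j ≤ ℓ and Y^{(ℓ+1)}(0) = (ℓ+1)!·α > 0. Then there exist a polynomial map h : ℝ → ℝ with h(0) = 0 and h'(0) > 0 and a real number μ such that h'(x)·Y(x) = (h(x))^{ℓ+1} + μ·(h(x))^{2ℓ+1} + o(x^{ℓ+r}) as x → 0⁺. (The vector field Y is smoothly conjugate to a vector field of the form x ↦ x^{ℓ+1} + μx^{2ℓ+1} + o(x^{ℓ+r}).) -/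
/-!
Replace `Y` by its Taylor polynomial `T` of order `ℓ + r`: the Peano remainder is `o(x ^ (ℓ + r))`,
so it suffices to find a polynomial `p` with `p' T - p ^ (ℓ + 1) - μ p ^ (2ℓ + 1) ≡ 0` modulo
`X ^ (ℓ + r + 1)`. Starting from `p = c X` with `c ^ ℓ = α`, this defect is pushed up one order at a
time: adding `t X ^ (m + 1)` to `p` changes the coefficient of the defect at order `ℓ + m + 1` by
`t c ^ ℓ (m - ℓ)`, which kills it unless `m = ℓ`; at that resonant order `μ` absorbs it instead.
-/

open Polynomial Set Filter Topology Asymptotics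

section PowDvd

variable {R : Type*} [CommRing R] {x a b : R} {k : ℕ}

theorem pow_add_dvd_pow_sub_pow (ha : x ∣ a) (hb : x ∣ b) (h : x ^ (k + 1) ∣ a - b) (n : ℕ) :
    x ^ (k + n) ∣ a ^ n - b ^ n := by
  induction n with
  | zero => simp
  | succ n ih =>
    have key : a ^ (n + 1) - b ^ (n + 1) = a ^ n * (a - b) + b * (a ^ n - b ^ n) := by ring
    rw [key]
    refine dvd_add ?_ ?_
    · rw [show k + (n + 1) = n + (k + 1) by omega, pow_add]
      exact mul_dvd_mul (pow_dvd_pow_of_dvd ha n) h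
    · rw [show k + (n + 1) = 1 + (k + n) by omega, pow_add, pow_one]
      exact mul_dvd_mul hb ih

theorem pow_dvd_add_pow_sub_pow_sub_mul (ha : x ∣ a) (hb : x ^ (k + 1) ∣ b) (n : ℕ) :
    x ^ (2 * k + 1 + n) ∣ (a + b) ^ (n + 1) - a ^ (n + 1) - ((n : R) + 1) * b * a ^ n := by
  induction n with
  | zero => simp
  | succ n ih =>
    have key : (a + b) ^ (n + 2) - a ^ (n + 2) - ((↑(n + 1) : R) + 1) * b * a ^ (n + 1)
        = (a + b) * ((a + b) ^ (n + 1) - a ^ (n + 1) - ((n : R) + 1) * b * a ^ n)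
          + ((n : R) + 1) * b ^ 2 * a ^ n := by
      push_cast; ring
    rw [key]
    refine dvd_add ?_ ?_
    · rw [show 2 * k + 1 + (n + 1) = 1 + (2 * k + 1 + n) by omega, pow_add, pow_one]
      exact mul_dvd_mul (dvd_add ha ((dvd_pow_self x k.succ_ne_zero).trans hb)) ih
    · rw [show 2 * k + 1 + (n + 1) = (k + 1) * 2 + n by omega, pow_add, pow_mul, mul_assoc]
      exact (mul_dvd_mul (pow_dvd_pow_of_dvd hb 2) (pow_dvd_pow_of_dvd ha n)).mul_left _

end PowDvd

theorem Polynomial.X_pow_succ_dvd_sub_C_coeff_mul_X_pow {R : Type*} [CommRing R] {P : R[X]}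
    {n : ℕ} (h : X ^ n ∣ P) : X ^ (n + 1) ∣ P - C (P.coeff n) * X ^ n := by
  rw [X_pow_dvd_iff] at h ⊢
  intro d hd
  rcases Nat.lt_succ_iff_lt_or_eq.1 hd with hd | rfl
  · simp [h d hd, hd.ne]
  · simp

theorem Polynomial.eval_zero_and_derivative_eval_zero_of_X_sq_dvd_sub {R : Type*} [CommRing R]
    {p : R[X]} {c : R} (hp : X ^ 2 ∣ p - C c * X) :
    p.eval 0 = 0 ∧ p.derivative.eval 0 = c := by
  obtain ⟨g, hg⟩ := hp
  rw [sub_eq_iff_eq_add] at hg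
  subst hg
  simp [derivative_mul]

section NormalForm

variable {R : Type*} [CommRing R]

/-- The defect of `h = p` in the conjugation equation `h' Y = Z ∘ h` with
`Z x = x ^ (ℓ + 1) + μ x ^ (2ℓ + 1)`, for `Y` replaced by its Taylor polynomial `T`. -/
noncomputable def normalFormDefect (ℓ : ℕ) (μ : R) (T p : R[X]) : R[X] :=
  derivative p * T - p ^ (ℓ + 1) - C μ * p ^ (2 * ℓ + 1)

variable {ℓ m : ℕ} {μ c t : R} {T p : R[X]}

theorem Polynomial.X_dvd_of_X_sq_dvd_sub (hp : X ^ 2 ∣ p - C c * X) : X ∣ p := by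
  simpa using dvd_add ((dvd_pow_self X two_ne_zero).trans hp) (dvd_mul_left X (C c))

theorem X_pow_dvd_normalFormDefect_C_mul_X (hT : X ^ (ℓ + 2) ∣ T - C c ^ ℓ * X ^ (ℓ + 1)) :
    X ^ (ℓ + 2) ∣ normalFormDefect ℓ 0 T (C c * X) := by
  have key : normalFormDefect ℓ 0 T (C c * X) = C c * (T - C c ^ ℓ * X ^ (ℓ + 1)) := by
    simp only [normalFormDefect, derivative_C_mul_X, map_zero]; ring
  exact key ▸ hT.mul_left _

theorem X_pow_dvd_normalFormDefect_add (hℓ : 1 ≤ ℓ) (hm : 1 ≤ m)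
    (hT : X ^ (ℓ + 2) ∣ T - C c ^ ℓ * X ^ (ℓ + 1)) (hp : X ^ 2 ∣ p - C c * X)
    (hD : X ^ (ℓ + m + 1) ∣ normalFormDefect ℓ μ T p)
    (ht : (normalFormDefect ℓ μ T p).coeff (ℓ + m + 1) = t * c ^ ℓ * ((ℓ : R) - m)) :
    X ^ (ℓ + m + 2) ∣ normalFormDefect ℓ μ T (p + C t * X ^ (m + 1)) := by
  set q := C t * X ^ (m + 1)
  set e := (normalFormDefect ℓ μ T p).coeff (ℓ + m + 1)
  have hq' : derivative q = C t * ((m : R[X]) + 1) * X ^ m := by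
    simp [q, mul_assoc]
  have hXq : X ^ (m + 1) ∣ q := dvd_mul_left _ _
  have hXp := X_dvd_of_X_sq_dvd_sub hp
  have hXpq : X ∣ p + q := dvd_add hXp ((dvd_pow_self X m.succ_ne_zero).trans hXq)
  have hCe : C e = C t * C c ^ ℓ * ((ℓ : R[X]) - m) := by simp [ht]
  have key : normalFormDefect ℓ μ T (p + q)
      = (normalFormDefect ℓ μ T p - C e * X ^ (ℓ + m + 1))
        + derivative q * (T - C c ^ ℓ * X ^ (ℓ + 1))
        - ((p + q) ^ (ℓ + 1) - p ^ (ℓ + 1) - ((ℓ : R[X]) + 1) * q * p ^ ℓ)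
        - ((ℓ : R[X]) + 1) * q * (p ^ ℓ - (C c * X) ^ ℓ)
        - C μ * ((p + q) ^ (2 * ℓ + 1) - p ^ (2 * ℓ + 1)) := by
    simp only [normalFormDefect, derivative_add, hq', q]
    linear_combination X ^ (ℓ + m + 1) * hCe
  have hle {a b : ℕ} (h : a ≤ b) : (X : R[X]) ^ a ∣ X ^ b := pow_dvd_pow X h
  rw [key]
  refine dvd_sub (dvd_sub (dvd_sub (dvd_add ?_ ?_) ?_) ?_) ?_
  · exact X_pow_succ_dvd_sub_C_coeff_mul_X_pow hD
  · rw [hq', show ℓ + m + 2 = m + (ℓ + 2) by omega, pow_add]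
    exact mul_dvd_mul (dvd_mul_left _ _) hT
  · exact (hle (by omega)).trans (pow_dvd_add_pow_sub_pow_sub_mul hXp hXq ℓ)
  · rw [mul_assoc, show ℓ + m + 2 = (m + 1) + (1 + ℓ) by omega, pow_add]
    exact (mul_dvd_mul hXq
      (pow_add_dvd_pow_sub_pow hXp (dvd_mul_left X (C c)) hp ℓ)).mul_left _
  · have hμ := pow_add_dvd_pow_sub_pow hXpq hXp (by simpa using hXq) (2 * ℓ + 1)
    exact ((hle (show ℓ + m + 2 ≤ m + (2 * ℓ + 1) by omega)).trans hμ).mul_left _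

theorem X_pow_dvd_normalFormDefect_of_resonant (hp : X ^ 2 ∣ p - C c * X)
    (hD : X ^ (2 * ℓ + 1) ∣ normalFormDefect ℓ μ T p)
    (ht : (normalFormDefect ℓ μ T p).coeff (2 * ℓ + 1) = t * c ^ (2 * ℓ + 1)) :
    X ^ (2 * ℓ + 2) ∣ normalFormDefect ℓ (μ + t) T p := by
  set e := (normalFormDefect ℓ μ T p).coeff (2 * ℓ + 1)
  have hCe : C e = C t * C c ^ (2 * ℓ + 1) := by simp [ht]
  have key : normalFormDefect ℓ (μ + t) T p
      = (normalFormDefect ℓ μ T p - C e * X ^ (2 * ℓ + 1))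
        - C t * (p ^ (2 * ℓ + 1) - (C c * X) ^ (2 * ℓ + 1)) := by
    simp only [normalFormDefect, C_add]
    linear_combination X ^ (2 * ℓ + 1) * hCe
  rw [key]
  refine dvd_sub (X_pow_succ_dvd_sub_C_coeff_mul_X_pow hD) (dvd_mul_of_dvd_right ?_ _)
  rw [show 2 * ℓ + 2 = 1 + (2 * ℓ + 1) by omega]
  exact pow_add_dvd_pow_sub_pow (X_dvd_of_X_sq_dvd_sub hp)
    (dvd_mul_left X (C c)) hp (2 * ℓ + 1)

variable {K : Type*} [Field K] [CharZero K] {μ c : K} {T p : K[X]}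

theorem exists_X_pow_dvd_normalFormDefect_succ (hℓ : 1 ≤ ℓ) (hm : 1 ≤ m) (hc : c ≠ 0)
    (hT : X ^ (ℓ + 2) ∣ T - C c ^ ℓ * X ^ (ℓ + 1)) (hp : X ^ 2 ∣ p - C c * X)
    (hD : X ^ (ℓ + m + 1) ∣ normalFormDefect ℓ μ T p) :
    ∃ (p' : K[X]) (μ' : K), X ^ 2 ∣ p' - C c * X ∧
      X ^ (ℓ + m + 2) ∣ normalFormDefect ℓ μ' T p' := by
  set e := (normalFormDefect ℓ μ T p).coeff (ℓ + m + 1)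
  rcases eq_or_ne m ℓ with rfl | hmℓ
  · refine ⟨p, μ + e / c ^ (2 * m + 1), hp, ?_⟩
    rw [show m + m + 2 = 2 * m + 2 by ring]
    refine X_pow_dvd_normalFormDefect_of_resonant hp (by rwa [two_mul]) ?_
    rw [div_mul_cancel₀ _ (pow_ne_zero _ hc), two_mul]
  · have hq : X ^ 2 ∣ p + C (e / (c ^ ℓ * ((ℓ : K) - m))) * X ^ (m + 1) - C c * X := by
      rw [add_sub_right_comm]
      exact dvd_add hp ((pow_dvd_pow X (by omega)).trans (dvd_mul_left _ _))
    refine ⟨_, μ, hq, X_pow_dvd_normalFormDefect_add hℓ hm hT hp hD ?_⟩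
    have : c ^ ℓ * ((ℓ : K) - m) ≠ 0 :=
      mul_ne_zero (pow_ne_zero _ hc) (sub_ne_zero.2 (Nat.cast_injective.ne hmℓ.symm))
    rw [mul_assoc, div_mul_cancel₀ _ this]

theorem exists_X_pow_dvd_normalFormDefect (hℓ : 1 ≤ ℓ) (hc : c ≠ 0)
    (hT : X ^ (ℓ + 2) ∣ T - C c ^ ℓ * X ^ (ℓ + 1)) (m : ℕ) :
    ∃ (p : K[X]) (μ : K), X ^ 2 ∣ p - C c * X ∧
      X ^ (ℓ + m + 2) ∣ normalFormDefect ℓ μ T p := by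
  induction m with
  | zero => exact ⟨C c * X, 0, by simp, X_pow_dvd_normalFormDefect_C_mul_X hT⟩
  | succ m ih =>
    obtain ⟨p, μ, hp, hD⟩ := ih
    exact exists_X_pow_dvd_normalFormDefect_succ hℓ m.succ_pos hc hT hp hD

end NormalForm

theorem Polynomial.isLittleO_eval_of_X_pow_succ_dvd {𝕜 : Type*} [NormedField 𝕜] {P : 𝕜[X]} {n : ℕ}
    (h : X ^ (n + 1) ∣ P) : (fun x ↦ P.eval x) =o[𝓝 0] (· ^ n) := by
  obtain ⟨g, rfl⟩ := h
  have hg : (fun x ↦ x * g.eval x) =o[𝓝 (0 : 𝕜)] (fun _ ↦ (1 : 𝕜)) := by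
    rw [isLittleO_one_iff]
    exact (by fun_prop : Continuous fun x : 𝕜 ↦ x * g.eval x).tendsto' 0 0 (by simp)
  refine ((isBigO_refl (· ^ n) _).mul_isLittleO hg).congr (fun x ↦ ?_) (fun x ↦ mul_one _)
  simp only [eval_mul, eval_pow, eval_X]
  ring

noncomputable def taylorPolynomialAtZero (f : ℝ → ℝ) (n : ℕ) (s : Set ℝ) : ℝ[X] :=
  ∑ k ∈ Finset.range (n + 1), C (taylorCoeffWithin f k s 0) * X ^ k

theorem eval_taylorPolynomialAtZero (f : ℝ → ℝ) (n : ℕ) (s : Set ℝ) (x : ℝ) :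
    (taylorPolynomialAtZero f n s).eval x = taylorWithinEval f n s 0 x := by
  simp [taylorPolynomialAtZero, taylor_within_apply, eval_finsetSum, taylorCoeffWithin, mul_comm,
    mul_assoc]

theorem coeff_taylorPolynomialAtZero {f : ℝ → ℝ} {n k : ℕ} (s : Set ℝ) (hk : k ≤ n) :
    (taylorPolynomialAtZero f n s).coeff k = taylorCoeffWithin f k s 0 := by
  simp [taylorPolynomialAtZero, Nat.lt_succ_iff.2 hk]

theorem isLittleO_sub_taylorPolynomialAtZero {f : ℝ → ℝ} {n : ℕ} {ε : ℝ} (hε : 0 < ε)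
    (hf : ContDiffOn ℝ n f (Ico 0 ε)) :
    (fun x ↦ f x - (taylorPolynomialAtZero f n (Ico 0 ε)).eval x) =o[𝓝[>] 0] (· ^ n) := by
  have := (taylor_isLittleO (convex_Ico 0 ε) (left_mem_Ico.2 hε) hf).mono
    (nhdsWithin_le_of_mem (Ico_mem_nhdsGT hε))
  simpa [eval_taylorPolynomialAtZero] using this

theorem X_pow_dvd_taylorPolynomialAtZero_sub {f : ℝ → ℝ} {n ℓ : ℕ} {s : Set ℝ} {a : ℝ}
    (hℓn : ℓ + 1 ≤ n) (hlow : ∀ j, j ≤ ℓ → iteratedDerivWithin j f s 0 = 0)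
    (hlead : iteratedDerivWithin (ℓ + 1) f s 0 = (ℓ + 1).factorial * a) :
    X ^ (ℓ + 2) ∣ taylorPolynomialAtZero f n s - C a * X ^ (ℓ + 1) := by
  have hX : X ^ (ℓ + 1) ∣ taylorPolynomialAtZero f n s := X_pow_dvd_iff.2 fun j hj ↦ by
    simp [coeff_taylorPolynomialAtZero s (by omega : j ≤ n), taylorCoeffWithin, hlow j (by omega)]
  have hcoeff : (taylorPolynomialAtZero f n s).coeff (ℓ + 1) = a := by
    simp [coeff_taylorPolynomialAtZero s hℓn, taylorCoeffWithin, hlead, (Nat.factorial_pos _).ne']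
  simpa [hcoeff] using X_pow_succ_dvd_sub_C_coeff_mul_X_pow hX

/-- Reduction lemma for vector fields (high range `r ≥ ℓ+1`): a `C^{ℓ+r}` vector field
whose Taylor expansion of order `ℓ+r` at `0` starts with `α·x^{ℓ+1}` (`α > 0`) is
polynomially conjugate to a vector field of the form
`x ↦ x^{ℓ+1} + μx^{2ℓ+1} + o(x^{ℓ+r})`. -/
theorem stmt_17 (ℓ r : ℕ) (hℓ : 1 ≤ ℓ) (hr : ℓ + 1 ≤ r)
    (ε : ℝ) (hε : 0 < ε) (Y : ℝ → ℝ) (α : ℝ) (hα : 0 < α)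
    (hY : ContDiffOn ℝ (ℓ + r : ℕ) Y (Set.Ico 0 ε))
    (hYj : ∀ j, j ≤ ℓ → iteratedDerivWithin j Y (Set.Ico 0 ε) 0 = 0)
    (hYl : iteratedDerivWithin (ℓ + 1) Y (Set.Ico 0 ε) 0 = (Nat.factorial (ℓ + 1) : ℝ) * α) :
    ∃ (p : Polynomial ℝ) (μ : ℝ),
      p.eval 0 = 0 ∧ 0 < p.derivative.eval 0 ∧
      Asymptotics.IsLittleO (nhdsWithin 0 (Set.Ioi 0))
        (fun x : ℝ => p.derivative.eval x * Y x
          - ((p.eval x) ^ (ℓ + 1) + μ * (p.eval x) ^ (2 * ℓ + 1)))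
        (fun x : ℝ => x ^ (ℓ + r)) := by
  obtain ⟨c, hc, rfl⟩ : ∃ c > 0, α = c ^ ℓ :=
    ⟨α ^ (ℓ⁻¹ : ℝ), by positivity, (Real.rpow_inv_natCast_pow hα.le (by omega)).symm⟩
  set T := taylorPolynomialAtZero Y (ℓ + r) (Ico 0 ε)
  have hT : X ^ (ℓ + 2) ∣ T - C c ^ ℓ * X ^ (ℓ + 1) := by
    simpa using X_pow_dvd_taylorPolynomialAtZero_sub (by omega) hYj hYl
  obtain ⟨p, μ, hp, hD⟩ := exists_X_pow_dvd_normalFormDefect hℓ hc.ne' hT r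
  obtain ⟨hp0, hp1⟩ := eval_zero_and_derivative_eval_zero_of_X_sq_dvd_sub hp
  refine ⟨p, μ, hp0, hp1 ▸ hc, ?_⟩
  have hp' : (fun x ↦ p.derivative.eval x) =O[𝓝[>] 0] (fun _ ↦ (1 : ℝ)) :=
    (p.derivative.continuous.tendsto' 0 _ rfl).mono_left nhdsWithin_le_nhds |>.isBigO_one ℝ
  have hE := (isLittleO_eval_of_X_pow_succ_dvd ((pow_dvd_pow X (Nat.le_succ _)).trans hD)).mono
    (nhdsWithin_le_nhds (s := Ioi 0))
  have hR := (hp'.mul_isLittleO (isLittleO_sub_taylorPolynomialAtZero hε hY)).congr_right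
    fun x ↦ one_mul (x ^ (ℓ + r))
  refine (hR.add hE).congr_left fun x ↦ ?_
  simp only [normalFormDefect, eval_sub, eval_mul, eval_pow, eval_C]
  ring
end

section
/- Let r ≥ 1 be an integer, θ ≠ 0 a real number, and ε > 0. Let φ : [0,ε) → ℝ be continuous with φ(0) = 1 and differentiable on (0,ε), and suppose that the map x ↦ x·φ(x) is of class C^r on [0,ε). Then there exists δ > 0 such that the map x ↦ x·(φ(x))^θ is of class C^r on [0,δ) (note that φ > 0 near 0 by continuity, so the real power (φ(x))^θ is well defined there). -/
/-!
Write `u x = x * φ x`. On `(0, ε)` we have `φ = u / x`, and Leibniz' rule gives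
`(x ^ (k + 1) * φ⁽ᵏ⁾)' = x ^ k * u⁽ᵏ⁺¹⁾`, so by L'Hôpital `φ⁽ᵏ⁾ → u⁽ᵏ⁺¹⁾(0) / (k + 1)` at `0⁺`
for `k < r`. A function whose derivatives all have limits at the endpoint is `C^(r-1)` up to it,
so `φ` is `C^(r-1)` on `[0, ε)`. Near `0` we have `φ ≠ 0`, and
`(x * φ ^ θ)' = (1 - θ) * φ ^ θ + θ * u' * φ ^ (θ - 1)` is `C^(r-1)`, hence `x * φ ^ θ` is `C^r`.
-/

open Set Filter Function
open scoped Topology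

section Endpoint

variable {a b : ℝ}

theorem continuousOn_update_Ico {f : ℝ → ℝ} {L : ℝ} (hf : ContinuousOn f (Ioo a b))
    (hL : Tendsto f (𝓝[>] a) (𝓝 L)) : ContinuousOn (update f a L) (Ico a b) := by
  intro x hx
  rcases hx.1.eq_or_lt with rfl | hax
  · rw [continuousWithinAt_update_same, Ico_sdiff_left]
    exact hL.mono_left (nhdsWithin_mono _ Ioo_subset_Ioi_self)
  · have hfx : ContinuousAt f x := hf.continuousAt (Ioo_mem_nhds hax hx.2)
    refine (hfx.congr ?_).continuousWithinAt
    filter_upwards [eventually_ne_nhds hax.ne'] with y hy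
    exact (update_of_ne hy _ _).symm

theorem contDiffOn_succ_Ico_of_hasDerivAt {n : ℕ} {g G : ℝ → ℝ}
    (hg : ContinuousOn g (Ico a b)) (hG : ContDiffOn ℝ n G (Ico a b))
    (hderiv : ∀ x ∈ Ioo a b, HasDerivAt g (G x) x) : ContDiffOn ℝ (n + 1) g (Ico a b) := by
  have hderiv_Ico : ∀ x ∈ Ico a b, HasDerivWithinAt g (G x) (Ico a b) x := by
    intro x hx
    rcases hx.1.eq_or_lt with rfl | hax
    · have hab : a < b := hx.2
      refine (hasDerivWithinAt_Ici_of_tendsto_deriv (s := Ioo a b) (fun y hy => ?_) ?_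
        (Ioo_mem_nhdsGT hab) ?_).mono Ico_subset_Ici_self
      · exact (hderiv y hy).differentiableAt.differentiableWithinAt
      · exact (hg a hx).mono Ioo_subset_Ico_self
      · have hGa : Tendsto G (𝓝[>] a) (𝓝 (G a)) := by
          rw [← nhdsWithin_Ioo_eq_nhdsGT hab]
          exact ((hG.continuousOn a hx).mono Ioo_subset_Ico_self).tendsto
        refine hGa.congr' ?_
        filter_upwards [Ioo_mem_nhdsGT hab] with y hy
        exact (hderiv y hy).deriv.symm
    · exact (hderiv x ⟨hax, hx.2⟩).hasDerivWithinAt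
  rw [contDiffOn_succ_iff_derivWithin (uniqueDiffOn_Ico a b)]
  refine ⟨fun x hx => (hderiv_Ico x hx).differentiableWithinAt, by simp, ?_⟩
  exact hG.congr fun x hx => (hderiv_Ico x hx).derivWithin ((uniqueDiffOn_Ico a b) x hx)

theorem contDiffOn_update_Ico_of_tendsto_iteratedDeriv {m : ℕ} {f : ℝ → ℝ} {L : ℕ → ℝ}
    (hf : ContDiffOn ℝ m f (Ioo a b))
    (hL : ∀ k ≤ m, Tendsto (iteratedDeriv k f) (𝓝[>] a) (𝓝 (L k))) :
    ContDiffOn ℝ m (update f a (L 0)) (Ico a b) := by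
  induction m generalizing f L with
  | zero =>
    exact contDiffOn_zero.mpr (continuousOn_update_Ico hf.continuousOn (by simpa using hL 0 le_rfl))
  | succ m ih =>
    have hderiv : ContDiffOn ℝ m (update (deriv f) a (L 1)) (Ico a b) :=
      ih (L := fun k => L (k + 1)) (hf.deriv_of_isOpen isOpen_Ioo (by push_cast; rfl))
        (fun k hk => by simpa [iteratedDeriv_succ'] using hL (k + 1) (by omega))
    push_cast
    refine contDiffOn_succ_Ico_of_hasDerivAt
      (continuousOn_update_Ico hf.continuousOn (by simpa using hL 0 (by omega))) hderiv
      fun x hx => ?_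
    have hfx : DifferentiableAt ℝ f x :=
        (hf.differentiableOn (by simp)).differentiableAt (Ioo_mem_nhds hx.1 hx.2)
    rw [update_of_ne hx.1.ne']
    refine hfx.hasDerivAt.congr_of_eventuallyEq ?_
    filter_upwards [eventually_ne_nhds hx.1.ne'] with y hy
    exact update_of_ne hy _ _

theorem ContDiffOn.tendsto_iteratedDeriv_nhdsGT {f : ℝ → ℝ} {m j : ℕ} (hab : a < b)
    (hf : ContDiffOn ℝ m f (Ico a b)) (hj : j ≤ m) :
    Tendsto (iteratedDeriv j f) (𝓝[>] a) (𝓝 (iteratedDerivWithin j f (Ico a b) a)) := by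
  have hcont := (hf.continuousOn_iteratedDerivWithin (by exact_mod_cast hj) (uniqueDiffOn_Ico a b))
    a ⟨le_rfl, hab⟩
  rw [← nhdsWithin_Ioo_eq_nhdsGT hab]
  refine (hcont.mono Ioo_subset_Ico_self).tendsto.congr' ?_
  filter_upwards [self_mem_nhdsWithin] with x hx
  exact iteratedDerivWithin_eq_iteratedDeriv (uniqueDiffOn_Ico a b)
    ((hf.of_le (by exact_mod_cast hj)).contDiffAt (Ico_mem_nhds hx.1 hx.2)) (Ioo_subset_Ico_self hx)

end Endpoint

theorem iteratedDeriv_succ_id_mul {𝕜 : Type*} [NontriviallyNormedField 𝕜] {φ : 𝕜 → 𝕜} {x : 𝕜}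
    {k : ℕ} (hφ : ContDiffAt 𝕜 (k + 1) φ x) :
    iteratedDeriv (k + 1) (fun y => y * φ y) x
      = x * iteratedDeriv (k + 1) φ x + (k + 1) * iteratedDeriv k φ x := by
  rw [iteratedDeriv_fun_mul (contDiffAt_id (n := ((k + 1 : ℕ) : WithTop ℕ∞)))
    (by exact_mod_cast hφ), Finset.sum_range_succ', Finset.sum_range_succ']
  simp [iteratedDeriv_fun_id, add_comm]

theorem ContDiffOn.hasDerivAt_iteratedDeriv {𝕜 : Type*} [NontriviallyNormedField 𝕜] {f : 𝕜 → 𝕜}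
    {s : Set 𝕜} {x : 𝕜} {m k : ℕ} (hs : IsOpen s) (hf : ContDiffOn 𝕜 m f s) (hk : k < m)
    (hx : x ∈ s) : HasDerivAt (iteratedDeriv k f) (iteratedDeriv (k + 1) f x) x := by
  have hdiff : DifferentiableAt 𝕜 (iteratedDerivWithin k f s) x :=
    (hf.differentiableOn_iteratedDerivWithin (by exact_mod_cast hk) hs.uniqueDiffOn x hx)
      |>.differentiableAt (hs.mem_nhds hx)
  have heq : iteratedDerivWithin k f s =ᶠ[𝓝 x] iteratedDeriv k f :=
    eventually_of_mem (hs.mem_nhds hx) fun y hy => iteratedDerivWithin_of_isOpen hs hy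
  rw [iteratedDeriv_succ]
  exact (hdiff.congr_of_eventuallyEq heq.symm).hasDerivAt

theorem tendsto_nhdsGT_of_hasDerivAt_pow_mul {H v : ℝ → ℝ} {b l : ℝ} {k : ℕ} (hb : 0 < b)
    (hderiv : ∀ x ∈ Ioo 0 b, HasDerivAt (fun y => y ^ (k + 1) * H y) (x ^ k * v x) x)
    (hzero : Tendsto (fun x => x ^ (k + 1) * H x) (𝓝[>] 0) (𝓝 0))
    (hv : Tendsto v (𝓝[>] 0) (𝓝 l)) :
    Tendsto H (𝓝[>] 0) (𝓝 (l / (k + 1))) := by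
  have hpow : Tendsto (fun x : ℝ => x ^ (k + 1)) (𝓝[>] 0) (𝓝 0) := by
    simpa using ((continuous_pow (k + 1)).tendsto (0 : ℝ)).mono_left nhdsWithin_le_nhds
  have hpow' : ∀ x ∈ Ioo (0 : ℝ) b, HasDerivAt (fun y => y ^ (k + 1)) ((k + 1) * x ^ k) x :=
    fun x _ => by simpa using hasDerivAt_pow (k + 1) x
  have := HasDerivAt.lhopital_zero_right_on_Ioo (l := 𝓝 (l / (k + 1))) hb hderiv hpow'
    (fun x hx => mul_ne_zero (by positivity) (pow_ne_zero _ hx.1.ne')) hzero hpow ?_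
  · refine this.congr' ?_
    filter_upwards [self_mem_nhdsWithin] with x (hx : 0 < x)
    exact mul_div_cancel_left₀ _ (pow_pos hx _).ne'
  · refine (hv.div_const (k + 1)).congr' ?_
    filter_upwards [self_mem_nhdsWithin] with x (hx : 0 < x)
    field_simp [(pow_pos hx k).ne']

theorem tendsto_iteratedDeriv_nhdsGT_of_contDiffOn_id_mul {n : ℕ} {ε : ℝ} {φ : ℝ → ℝ}
    (hε : 0 < ε) (hφ : ContDiffOn ℝ (n + 1 : ℕ) φ (Ioo 0 ε))
    (hu : ContDiffOn ℝ (n + 1 : ℕ) (fun x => x * φ x) (Ico 0 ε)) {k : ℕ} (hk : k ≤ n) :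
    Tendsto (iteratedDeriv k φ) (𝓝[>] 0)
      (𝓝 (iteratedDerivWithin (k + 1) (fun x => x * φ x) (Ico 0 ε) 0 / (k + 1))) := by
  have hleibniz : ∀ j ≤ n, ∀ x ∈ Ioo 0 ε, iteratedDeriv (j + 1) (fun y => y * φ y) x
      = x * iteratedDeriv (j + 1) φ x + (j + 1) * iteratedDeriv j φ x := fun j hj x hx =>
    iteratedDeriv_succ_id_mul <| (hφ.contDiffAt (Ioo_mem_nhds hx.1 hx.2)).of_le <| by
      exact_mod_cast Nat.succ_le_succ hj
  have hderiv : ∀ j ≤ n, ∀ x ∈ Ioo 0 ε, HasDerivAt (fun y => y ^ (j + 1) * iteratedDeriv j φ y)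
      (x ^ j * iteratedDeriv (j + 1) (fun y => y * φ y) x) x := by
    intro j hj x hx
    refine ((hasDerivAt_pow (j + 1) x).mul
      (hφ.hasDerivAt_iteratedDeriv isOpen_Ioo (Nat.lt_succ_of_le hj) hx)).congr_deriv ?_
    rw [hleibniz j hj x hx]
    push_cast
    ring
  have hlim_u : ∀ j ≤ n + 1, Tendsto (iteratedDeriv j (fun y => y * φ y)) (𝓝[>] 0)
      (𝓝 (iteratedDerivWithin j (fun y => y * φ y) (Ico 0 ε) 0)) :=
    fun j hj => hu.tendsto_iteratedDeriv_nhdsGT hε hj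
  induction k with
  | zero =>
    refine tendsto_nhdsGT_of_hasDerivAt_pow_mul hε (hderiv 0 hk) ?_ (hlim_u 1 (by omega))
    simpa using hlim_u 0 (Nat.zero_le _)
  | succ j ih =>
    refine tendsto_nhdsGT_of_hasDerivAt_pow_mul hε (hderiv (j + 1) hk) ?_ (hlim_u _ (by omega))
    -- by Leibniz, `x ^ (j + 2) * φ⁽ʲ⁺¹⁾ = x ^ (j + 1) * (u⁽ʲ⁺¹⁾ - (j + 1) * φ⁽ʲ⁾)`,
    -- and the second factor converges
    have hpow : Tendsto (fun x : ℝ => x ^ (j + 1)) (𝓝[>] 0) (𝓝 0) := by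
      simpa using ((continuous_pow (j + 1)).tendsto (0 : ℝ)).mono_left nhdsWithin_le_nhds
    have := hpow.mul ((hlim_u (j + 1) (by omega)).sub ((ih (by omega)).const_mul ((j : ℝ) + 1)))
    rw [zero_mul] at this
    refine this.congr' ?_
    filter_upwards [Ioo_mem_nhdsGT hε] with x hx
    rw [hleibniz j (by omega) x hx]
    ring

theorem contDiffOn_Ioo_of_contDiffOn_id_mul {m : WithTop ℕ∞} {ε : ℝ} {φ : ℝ → ℝ}
    (hu : ContDiffOn ℝ m (fun x => x * φ x) (Ico 0 ε)) : ContDiffOn ℝ m φ (Ioo 0 ε) :=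
  ((hu.mono Ioo_subset_Ico_self).div contDiffOn_id fun x hx => hx.1.ne').congr fun x hx => by
    simp [hx.1.ne']

theorem contDiffOn_Ico_of_contDiffOn_id_mul {n : ℕ} {ε : ℝ} {φ : ℝ → ℝ}
    (hφ : ContinuousWithinAt φ (Ico 0 ε) 0)
    (hu : ContDiffOn ℝ (n + 1 : ℕ) (fun x => x * φ x) (Ico 0 ε)) :
    ContDiffOn ℝ n φ (Ico 0 ε) := by
  rcases le_or_gt ε 0 with hε | hε
  · simp [Ico_eq_empty_of_le hε]
  have hφIoo := contDiffOn_Ioo_of_contDiffOn_id_mul hu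
  have hlim := fun k (hk : k ≤ n) =>
    tendsto_iteratedDeriv_nhdsGT_of_contDiffOn_id_mul hε hφIoo hu hk
  have hφ0 : φ 0 = iteratedDerivWithin 1 (fun x => x * φ x) (Ico 0 ε) 0 / (0 + 1) := by
    refine tendsto_nhds_unique ?_ (by simpa using hlim 0 (Nat.zero_le _))
    rw [← nhdsWithin_Ioo_eq_nhdsGT hε]
    exact (hφ.mono Ioo_subset_Ico_self).tendsto
  have := contDiffOn_update_Ico_of_tendsto_iteratedDeriv (hφIoo.of_le (by simp)) hlim
  rwa [Nat.cast_zero, ← hφ0, update_eq_self] at this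

theorem hasDerivAt_mul_rpow {φ : ℝ → ℝ} {φ' x : ℝ} (θ : ℝ) (hφ : HasDerivAt φ φ' x)
    (hx : φ x ≠ 0) : HasDerivAt (fun y => y * φ y ^ θ)
      ((1 - θ) * φ x ^ θ + θ * (φ x + x * φ') * φ x ^ (θ - 1)) x := by
  refine ((hasDerivAt_id' x).fun_mul (hφ.rpow_const (Or.inl hx))).congr_deriv ?_
  rw [Real.rpow_sub_one hx]
  field_simp
  ring

theorem contDiffOn_id_mul_rpow {n : ℕ} {b : ℝ} {φ : ℝ → ℝ} (θ : ℝ)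
    (hφ : ContinuousWithinAt φ (Ico 0 b) 0) (hne : ∀ x ∈ Ico 0 b, φ x ≠ 0)
    (hu : ContDiffOn ℝ (n + 1 : ℕ) (fun x => x * φ x) (Ico 0 b)) :
    ContDiffOn ℝ (n + 1 : ℕ) (fun x => x * φ x ^ θ) (Ico 0 b) := by
  have hφC := contDiffOn_Ico_of_contDiffOn_id_mul hφ hu
  have hu' : ContDiffOn ℝ n (derivWithin (fun x => x * φ x) (Ico 0 b)) (Ico 0 b) :=
    hu.derivWithin (uniqueDiffOn_Ico 0 b) (by push_cast; rfl)
  have hG : ContDiffOn ℝ n (fun x => (1 - θ) * φ x ^ θ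
      + θ * derivWithin (fun y => y * φ y) (Ico 0 b) x * φ x ^ (θ - 1)) (Ico 0 b) :=
    (contDiffOn_const.mul (hφC.rpow_const_of_ne hne)).add
      ((contDiffOn_const.mul hu').mul (hφC.rpow_const_of_ne hne))
  push_cast
  refine contDiffOn_succ_Ico_of_hasDerivAt
    (continuousOn_id.mul (hφC.continuousOn.rpow_const fun x hx => Or.inl (hne x hx))) hG
    fun x hx => ?_
  have hφx : DifferentiableAt ℝ φ x := ((contDiffOn_Ioo_of_contDiffOn_id_mul hu).differentiableOn
    (by simp)).differentiableAt (Ioo_mem_nhds hx.1 hx.2)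
  have hux : derivWithin (fun y => y * φ y) (Ico 0 b) x = φ x + x * deriv φ x := by
    rw [derivWithin_of_mem_nhds (Ico_mem_nhds hx.1 hx.2)]
    simpa using ((hasDerivAt_id' x).fun_mul hφx.hasDerivAt).deriv
  rw [hux]
  exact hasDerivAt_mul_rpow θ hφx.hasDerivAt (hne x (Ioo_subset_Ico_self hx))

theorem stmt_18_general (r : ℕ) (hr : 1 ≤ r) (θ : ℝ) (ε : ℝ) (hε : 0 < ε)
    (φ : ℝ → ℝ)
    (hφc : ContinuousOn φ (Set.Ico 0 ε)) (hφ0 : φ 0 = 1)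
    (hu : ContDiffOn ℝ (r : ℕ) (fun x : ℝ => x * φ x) (Set.Ico 0 ε)) :
    ∃ δ : ℝ, 0 < δ ∧ δ ≤ ε ∧
      ContDiffOn ℝ (r : ℕ) (fun x : ℝ => x * (φ x) ^ θ) (Set.Ico 0 δ) := by
  have hφc0 : ContinuousWithinAt φ (Ico 0 ε) 0 := hφc 0 ⟨le_rfl, hε⟩
  have hev : ∀ᶠ x in 𝓝[≥] 0, φ x ≠ 0 := by
    rw [← nhdsWithin_Ico_eq_nhdsGE hε]
    exact hφc0.eventually (isOpen_ne.mem_nhds (by simp [hφ0]))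
  obtain ⟨δ, hδ, hne⟩ := mem_nhdsGE_iff_exists_Ico_subset.mp hev
  have hsub : Ico 0 (min δ ε) ⊆ Ico 0 ε := Ico_subset_Ico_right (min_le_right δ ε)
  refine ⟨min δ ε, lt_min hδ hε, min_le_right δ ε, ?_⟩
  rw [← Nat.sub_add_cancel hr] at hu ⊢
  exact contDiffOn_id_mul_rpow θ (hφc0.mono hsub)
    (fun x hx => hne ⟨hx.1, hx.2.trans_le (min_le_left δ ε)⟩) (hu.mono hsub)

/-- If `φ` is continuous with `φ(0) = 1`, differentiable away from `0`, and `x ↦ x·φ(x)` is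
of class `C^r` on `[0,ε)`, then `x ↦ x·(φ(x))^θ` is of class `C^r` on some `[0,δ)`
(here `t^θ` is the real power, `Real.rpow`). -/
theorem stmt_18 (r : ℕ) (hr : 1 ≤ r) (θ : ℝ) (hθ : θ ≠ 0) (ε : ℝ) (hε : 0 < ε)
    (φ : ℝ → ℝ)
    (hφc : ContinuousOn φ (Set.Ico 0 ε)) (hφ0 : φ 0 = 1)
    (hφd : DifferentiableOn ℝ φ (Set.Ioo 0 ε))
    (hu : ContDiffOn ℝ (r : ℕ) (fun x : ℝ => x * φ x) (Set.Ico 0 ε)) :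
    ∃ δ : ℝ, 0 < δ ∧ δ ≤ ε ∧
      ContDiffOn ℝ (r : ℕ) (fun x : ℝ => x * (φ x) ^ θ) (Set.Ico 0 δ) :=
  stmt_18_general r hr θ ε hε φ hφc hφ0 hu
end
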